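/- arXiv:1106.2993 — 4 statements merged into one kernel-verified Lean document; each statement's English description precedes it below -/
import Mathlib

section
/- Let b₀, b₁ be reals with 0 < b₁ ≤ b₀ and b₀ + b₁ < 1, let μ* be the (b₀,b₁)-branching measure on C, and let T be the associated capacity (with T(∅) = 0). Let σ₀, …, σ_n be pairwise incomparable binary strings (no one an initial segment of another), let Q = ⋃_{k=0}^{n} I(σ_k), and let j ≤ n. Then T(Q) − T(⋃_{k ≤ n, k ≠ j} I(σ_k)) ≤ (1 − b₁)^{|σ_j|}. -/
open Set MeasureTheory Topology Filter

/-- Cantor space `2^ℕ`. -/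
abbrev Cantor : Type := ℕ → Bool

/-- The basic interval `I(σ)` of all extensions of the finite binary string `σ`. -/
def cyl (σ : List Bool) : Set Cantor :=
  {x | ∀ i : Fin σ.length, x i = σ.get i}

/-- The space `C` of nonempty closed subsets of Cantor space. -/
abbrev CC : Type := {K : Set Cantor // K.Nonempty ∧ IsClosed K}

/-- The hit-or-miss topology on `C`, generated by the sets
`V(U) = {K : K ∩ U ≠ ∅}` and `W(U) = {K : K ⊆ U}` for `U` open. -/
instance (priority := 10000) hitMissTop : TopologicalSpace CC :=
  TopologicalSpace.generateFrom
    ({S | ∃ U : Set Cantor, IsOpen U ∧ S = {K : CC | (K.1 ∩ U).Nonempty}} ∪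
     {S | ∃ U : Set Cantor, IsOpen U ∧ S = {K : CC | K.1 ⊆ U}})

/-- The Borel σ-algebra of the hit-or-miss topology. -/
instance (priority := 10000) hitMissMeasurable : MeasurableSpace CC := borel CC

/-- `A` is a finite tree of height `n` without dead ends. -/
def FinTree (n : ℕ) (A : Finset (List Bool)) : Prop :=
  A.Nonempty ∧
  (∀ σ ∈ A, σ.length ≤ n) ∧
  (∀ σ τ : List Bool, σ <+: τ → τ ∈ A → σ ∈ A) ∧
  (∀ σ ∈ A, σ.length < n → σ ++ [false] ∈ A ∨ σ ++ [true] ∈ A)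

/-- `U_A = {K ∈ C : T_K ∩ {0,1}^{≤ n} = A}`. -/
def UA (n : ℕ) (A : Finset (List Bool)) : Set CC :=
  {K | ∀ σ : List Bool, σ.length ≤ n → (σ ∈ A ↔ (K.1 ∩ cyl σ).Nonempty)}

/-- The weight of a node `σ` of `A` in the symmetric branching process with parameter `β`. -/
noncomputable def symWeight (β : List Bool → ℝ) (A : Finset (List Bool)) (σ : List Bool) : ℝ :=
  if σ ++ [false] ∈ A ∧ σ ++ [true] ∈ A then 1 - 2 * β σ else β σ

/-- `μ` is the symmetric branching measure on `C` with parameter `β`. -/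
def IsSymBranching (β : List Bool → ℝ) (μ : Measure CC) : Prop :=
  IsProbabilityMeasure μ ∧
  ∀ (n : ℕ) (A : Finset (List Bool)), FinTree n A →
    (μ (UA n A)).toReal = ∏ σ ∈ A.filter (fun σ => σ.length < n), symWeight β A σ

/-- The weight of a node `σ` of `A` in the `(b₀,b₁)`-branching process. -/
noncomputable def asymWeight (b0 b1 : ℝ) (A : Finset (List Bool)) (σ : List Bool) : ℝ :=
  if σ ++ [false] ∈ A ∧ σ ++ [true] ∈ A then 1 - b0 - b1
  else if σ ++ [false] ∈ A then b0 else b1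

/-- `μ` is the `(b₀,b₁)`-branching measure on `C`. -/
def IsBranching (b0 b1 : ℝ) (μ : Measure CC) : Prop :=
  IsProbabilityMeasure μ ∧
  ∀ (n : ℕ) (A : Finset (List Bool)), FinTree n A →
    (μ (UA n A)).toReal = ∏ σ ∈ A.filter (fun σ => σ.length < n), asymWeight b0 b1 A σ

/-- The capacity `T(Q) = μ*({K ∈ C : K ∩ Q ≠ ∅})` associated to a measure on `C`. -/
noncomputable def cap (μ : Measure CC) (Q : Set Cantor) : ℝ :=
  (μ {K : CC | (K.1 ∩ Q).Nonempty}).toReal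

/-!
The capacity is monotone and subadditive, so the difference is at most `T(I(τ))` with
`τ = σ_j`, which is at most the total `μ*`-weight of the trees of height `|τ|` containing `τ`.
Splitting a tree at its root into its (possibly empty) left and right subtrees gives a recursion
for that weight along `τ`: a step to the left contributes the factor `b₀ + (1 - b₀ - b₁) t`, a
step to the right `b₁ + (1 - b₀ - b₁) t`, where `t ≤ 1` is the total weight of the sibling
subtree. Both factors are at most `1 - b₁` since `b₁ ≤ b₀`.
-/

namespace CantorTree

variable {b0 b1 : ℝ} {m n : ℕ} {A B C : Finset (List Bool)}

def node (B C : Finset (List Bool)) : Finset (List Bool) :=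
  insert [] (B.image (false :: ·) ∪ C.image (true :: ·))

noncomputable def child (c : Bool) (A : Finset (List Bool)) : Finset (List Bool) :=
  A.preimage (c :: ·) List.cons_injective.injOn

@[simp] lemma mem_child {c : Bool} {σ : List Bool} :
    σ ∈ child c A ↔ c :: σ ∈ A :=
  Finset.mem_preimage

@[simp] lemma nil_mem_node : [] ∈ node B C := Finset.mem_insert_self _ _

@[simp] lemma false_cons_mem_node {σ : List Bool} : false :: σ ∈ node B C ↔ σ ∈ B := by
  simp [node]

@[simp] lemma true_cons_mem_node {σ : List Bool} : true :: σ ∈ node B C ↔ σ ∈ C := by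
  simp [node]

@[simp] lemma child_false_node : child false (node B C) = B := by ext; simp

@[simp] lemma child_true_node : child true (node B C) = C := by ext; simp

lemma node_child (h : [] ∈ A) :
    node (child false A) (child true A) = A := by
  ext σ
  rcases σ with _ | ⟨_ | _, σ⟩ <;> simp [h]

lemma forall_mem_node {p : List Bool → Prop} :
    (∀ σ ∈ node B C, p σ) ↔ p [] ∧ (∀ σ ∈ B, p (false :: σ)) ∧ ∀ σ ∈ C, p (true :: σ) := by
  simp [node, or_imp, forall_and]

lemma prod_node {M : Type*} [CommMonoid M] (f : List Bool → M) :
    ∏ σ ∈ node B C, f σ = f [] * (∏ σ ∈ B, f (false :: σ)) * ∏ σ ∈ C, f (true :: σ) := by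
  have hdisj : Disjoint (B.image (false :: ·)) (C.image (true :: ·)) := by
    simp [Finset.disjoint_left]
  rw [node, Finset.prod_insert (by simp), Finset.prod_union hdisj,
    Finset.prod_image List.cons_injective.injOn, Finset.prod_image List.cons_injective.injOn,
    mul_assoc]

lemma filter_node {p : List Bool → Prop} [DecidablePred p] (h : p []) :
    (node B C).filter p = node (B.filter (p <| false :: ·)) (C.filter (p <| true :: ·)) := by
  ext σ
  rcases σ with _ | ⟨_ | _, σ⟩ <;> simp [h]

def IsPruned (m : ℕ) (B : Finset (List Bool)) : Prop :=
  (∀ σ ∈ B, σ.length ≤ m) ∧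
  (∀ σ τ : List Bool, σ <+: τ → τ ∈ B → σ ∈ B) ∧
  (∀ σ ∈ B, σ.length < m → σ ++ [false] ∈ B ∨ σ ++ [true] ∈ B)

lemma finTree_iff : FinTree m A ↔ A.Nonempty ∧ IsPruned m A := Iff.rfl

lemma _root_.FinTree.nil_mem (h : FinTree m A) : [] ∈ A := by
  obtain ⟨⟨σ, hσ⟩, -, hpre, -⟩ := h
  exact hpre [] σ List.nil_prefix hσ

lemma isPruned_iff_eq_empty_or_finTree : IsPruned m B ↔ B = ∅ ∨ FinTree m B := by
  rcases B.eq_empty_or_nonempty with rfl | hB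
  · simp [IsPruned]
  · simp [finTree_iff, hB, hB.ne_empty]

lemma finTree_succ_node_iff :
    FinTree (m + 1) (node B C) ↔ IsPruned m B ∧ IsPruned m C ∧ ([] ∈ B ∨ [] ∈ C) := by
  have hpre : ∀ {A : Finset (List Bool)},
      (∀ σ τ : List Bool, σ <+: τ → τ ∈ A → σ ∈ A) ↔ ∀ τ ∈ A, ∀ σ, σ <+: τ → σ ∈ A :=
    ⟨fun h τ hτ σ hστ => h σ τ hστ hτ, fun h σ τ hστ hτ => h τ hτ σ hστ⟩
  simp only [finTree_iff, IsPruned, hpre, forall_mem_node, List.prefix_cons_iff]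
  simp only [show (node B C).Nonempty from ⟨[], nil_mem_node⟩, true_and]
  simp [or_imp, forall_and, @forall_comm (List Bool) (List Bool)]
  tauto

open Classical in
noncomputable def trees (n : ℕ) : Finset (Finset (List Bool)) :=
  (List.finite_length_le Bool n).toFinset.powerset.filter (FinTree n)

lemma mem_trees : A ∈ trees n ↔ FinTree n A := by
  simp only [trees, Finset.mem_filter, Finset.mem_powerset, and_iff_right_iff_imp]
  intro h σ hσ
  simpa using h.2.1 σ hσ

lemma trees_zero : trees 0 = {{[]}} := by
  ext A
  rw [mem_trees, Finset.mem_singleton]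
  constructor
  · intro h
    ext σ
    refine ⟨fun hσ => by simpa using h.2.1 σ hσ, ?_⟩
    intro hσ
    rw [Finset.mem_singleton.1 hσ]
    exact h.nil_mem
  · rintro rfl
    exact ⟨⟨[], by simp⟩, by simp, fun σ τ h hτ => by simp_all, by simp⟩

lemma mem_insert_empty_trees : B ∈ insert ∅ (trees m) ↔ IsPruned m B := by
  rw [Finset.mem_insert, mem_trees, isPruned_iff_eq_empty_or_finTree]

lemma nil_mem_of_isPruned (h : IsPruned m B) (hne : B ≠ ∅) : [] ∈ B :=
  ((isPruned_iff_eq_empty_or_finTree.1 h).resolve_left hne).nil_mem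

/-- A tree of height `m + 1` is `node B C` for a unique pair of pruned trees `B`, `C` of
height `m`, not both empty. -/
lemma sum_trees_succ {M : Type*} [AddCommGroup M] (g : Finset (List Bool) → M) :
    ∑ A ∈ trees (m + 1), g A = ∑ B ∈ trees m, g (node B ∅) + ∑ C ∈ trees m, g (node ∅ C) +
      ∑ B ∈ trees m, ∑ C ∈ trees m, g (node B C) := by
  classical
  have hbij : ∑ A ∈ trees (m + 1), g A =
      ∑ p ∈ (insert ∅ (trees m) ×ˢ insert ∅ (trees m)).erase (∅, ∅), g (node p.1 p.2) := by
    refine Finset.sum_nbij' (fun A => (child false A, child true A)) (fun p => node p.1 p.2)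
      ?_ ?_ (fun A hA => node_child (mem_trees.1 hA).nil_mem) (fun p _ => by simp)
      (fun A hA => by simp only [node_child (mem_trees.1 hA).nil_mem])
    · intro A hA
      have hA := mem_trees.1 hA
      rw [← node_child hA.nil_mem, finTree_succ_node_iff] at hA
      obtain ⟨hB, hC, hroot⟩ := hA
      simp only [Finset.mem_erase, Finset.mem_product, mem_insert_empty_trees, ne_eq,
        Prod.mk.injEq]
      refine ⟨?_, hB, hC⟩
      rintro ⟨hB0, hC0⟩
      simp_all
    · rintro ⟨B, C⟩ hp
      simp only [Finset.mem_erase, Finset.mem_product, mem_insert_empty_trees, ne_eq,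
        Prod.mk.injEq, not_and_or] at hp
      obtain ⟨hne, hB, hC⟩ := hp
      refine mem_trees.2 (finTree_succ_node_iff.2 ⟨hB, hC, ?_⟩)
      exact hne.imp (nil_mem_of_isPruned hB) (nil_mem_of_isPruned hC)
  have hempty : (∅ : Finset (List Bool)) ∉ trees m := fun h => by
    simpa using (mem_trees.1 h).nil_mem
  rw [hbij, Finset.sum_erase_eq_sub (by simp), Finset.sum_product,
    Finset.sum_insert hempty, Finset.sum_insert hempty, Finset.sum_congr rfl
      fun B _ => Finset.sum_insert hempty, Finset.sum_add_distrib]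
  abel

noncomputable def branchWeight (b0 b1 : ℝ) (n : ℕ) (A : Finset (List Bool)) : ℝ :=
  ∏ σ ∈ A.filter (fun σ => σ.length < n), asymWeight b0 b1 A σ

lemma asymWeight_cons (c : Bool) (σ : List Bool) :
    asymWeight b0 b1 A (c :: σ) = asymWeight b0 b1 (child c A) σ := by
  simp [asymWeight]

@[simp] lemma branchWeight_empty : branchWeight b0 b1 n ∅ = 1 := by
  simp [branchWeight]

lemma branchWeight_node : branchWeight b0 b1 (m + 1) (node B C) =
    asymWeight b0 b1 (node B C) [] * branchWeight b0 b1 m B * branchWeight b0 b1 m C := by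
  simp [branchWeight, filter_node, prod_node, asymWeight_cons]

lemma branchWeight_node_left (hB : [] ∈ B) :
    branchWeight b0 b1 (m + 1) (node B ∅) = b0 * branchWeight b0 b1 m B := by
  simp [branchWeight_node, asymWeight, hB]

lemma branchWeight_node_right (hC : [] ∈ C) :
    branchWeight b0 b1 (m + 1) (node ∅ C) = b1 * branchWeight b0 b1 m C := by
  simp [branchWeight_node, asymWeight, hC]

lemma branchWeight_node_both (hB : [] ∈ B) (hC : [] ∈ C) :
    branchWeight b0 b1 (m + 1) (node B C) =
      (1 - b0 - b1) * branchWeight b0 b1 m B * branchWeight b0 b1 m C := by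
  simp [branchWeight_node, asymWeight, hB, hC]

lemma branchWeight_nonneg (hb0 : 0 ≤ b0) (hb1 : 0 ≤ b1) (hsum : b0 + b1 ≤ 1) :
    0 ≤ branchWeight b0 b1 n A :=
  Finset.prod_nonneg fun σ _ => by unfold asymWeight; split_ifs <;> linarith

noncomputable def hitWeight (b0 b1 : ℝ) (n : ℕ) (τ : List Bool) : ℝ :=
  ∑ A ∈ (trees n).filter (τ ∈ ·), branchWeight b0 b1 n A

lemma hitWeight_zero (τ : List Bool) : hitWeight b0 b1 0 τ = if τ = [] then 1 else 0 := by
  simp only [hitWeight, trees_zero, Finset.filter_singleton, Finset.mem_singleton]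
  split_ifs <;> simp [branchWeight]

lemma sum_trees_succ_mul_branchWeight (f : Finset (List Bool) → ℝ) :
    ∑ A ∈ trees (m + 1), f A * branchWeight b0 b1 (m + 1) A =
      b0 * ∑ B ∈ trees m, f (node B ∅) * branchWeight b0 b1 m B +
      b1 * ∑ C ∈ trees m, f (node ∅ C) * branchWeight b0 b1 m C +
      (1 - b0 - b1) * ∑ B ∈ trees m, ∑ C ∈ trees m,
        f (node B C) * (branchWeight b0 b1 m B * branchWeight b0 b1 m C) := by
  have hnil : ∀ B ∈ trees m, [] ∈ B := fun B hB => (mem_trees.1 hB).nil_mem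
  simp only [sum_trees_succ, Finset.mul_sum]
  congr 1
  · congr 1 <;> refine Finset.sum_congr rfl fun B hB => ?_
    · rw [branchWeight_node_left (hnil B hB)]; ring
    · rw [branchWeight_node_right (hnil B hB)]; ring
  · refine Finset.sum_congr rfl fun B hB => Finset.sum_congr rfl fun C hC => ?_
    rw [branchWeight_node_both (hnil B hB) (hnil C hC)]; ring

lemma hitWeight_eq_sum (τ : List Bool) : hitWeight b0 b1 n τ =
    ∑ A ∈ trees n, (if τ ∈ A then 1 else 0) * branchWeight b0 b1 n A := by
  simp only [hitWeight, Finset.sum_filter, boole_mul]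

lemma hitWeight_nil : hitWeight b0 b1 n [] = ∑ A ∈ trees n, branchWeight b0 b1 n A := by
  rw [hitWeight, Finset.filter_true_of_mem fun A hA => (mem_trees.1 hA).nil_mem]

lemma hitWeight_succ_nil : hitWeight b0 b1 (m + 1) [] =
    (b0 + b1) * hitWeight b0 b1 m [] + (1 - b0 - b1) * hitWeight b0 b1 m [] ^ 2 := by
  have h := sum_trees_succ_mul_branchWeight (b0 := b0) (b1 := b1) (m := m) fun _ => 1
  simp only [one_mul] at h
  rw [hitWeight_nil, hitWeight_nil, h, sq, Finset.sum_mul_sum]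
  ring

lemma hitWeight_succ_cons (c : Bool) (ρ : List Bool) : hitWeight b0 b1 (m + 1) (c :: ρ) =
    ((bif c then b1 else b0) + (1 - b0 - b1) * hitWeight b0 b1 m []) * hitWeight b0 b1 m ρ := by
  rw [hitWeight_nil, hitWeight_eq_sum, hitWeight_eq_sum, sum_trees_succ_mul_branchWeight,
    add_mul, mul_assoc, Finset.sum_mul_sum]
  cases c <;>
    simp only [false_cons_mem_node, true_cons_mem_node, Finset.notMem_empty, if_false,
      zero_mul, Finset.sum_const_zero, mul_zero, add_zero, zero_add, cond_false, cond_true] <;>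
    congr 2
  · rw [Finset.sum_comm]
    exact Finset.sum_congr rfl fun _ _ => Finset.sum_congr rfl fun _ _ => by ring
  · exact Finset.sum_congr rfl fun _ _ => Finset.sum_congr rfl fun _ _ => by ring

lemma hitWeight_nonneg (hb0 : 0 ≤ b0) (hb1 : 0 ≤ b1) (hsum : b0 + b1 ≤ 1) (n : ℕ)
    (τ : List Bool) : 0 ≤ hitWeight b0 b1 n τ :=
  Finset.sum_nonneg fun _ _ => branchWeight_nonneg hb0 hb1 hsum

theorem hitWeight_le (hb1 : 0 ≤ b1) (hb01 : b1 ≤ b0) (hsum : b0 + b1 ≤ 1) (n : ℕ)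
    (τ : List Bool) : hitWeight b0 b1 n τ ≤ (1 - b1) ^ τ.length := by
  have hnonneg := hitWeight_nonneg (hb1.trans hb01) hb1 hsum
  induction n generalizing τ with
  | zero =>
    rw [hitWeight_zero]
    split_ifs with h
    · simp [h]
    · exact pow_nonneg (by linarith) _
  | succ m ih =>
    have htot : hitWeight b0 b1 m [] ≤ 1 := by simpa using ih []
    have hsib := mul_le_mul_of_nonneg_left htot (by linarith : 0 ≤ 1 - b0 - b1)
    cases τ with
    | nil =>
      rw [hitWeight_succ_nil, List.length_nil, pow_zero]
      nlinarith [hnonneg m []]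
    | cons c ρ =>
      have hc : (bif c then b1 else b0) ≤ b0 := by cases c <;> simp [hb01]
      rw [hitWeight_succ_cons, List.length_cons, pow_succ']
      calc _ ≤ (1 - b1) * hitWeight b0 b1 m ρ :=
            mul_le_mul_of_nonneg_right (by linarith) (hnonneg m ρ)
        _ ≤ (1 - b1) * (1 - b1) ^ ρ.length :=
            mul_le_mul_of_nonneg_left (ih ρ) (by linarith)

end CantorTree

section Capacity

open CantorTree

@[simp] lemma cyl_nil : cyl [] = univ := by
  ext x
  simp [cyl]

lemma cyl_anti {s t : List Bool} (h : s <+: t) : cyl t ⊆ cyl s := fun x hx i => by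
  rw [hx ⟨i, i.2.trans_le h.length_le⟩]
  exact (h.getElem i.2).symm

lemma mem_cyl_concat {x : Cantor} {s : List Bool} (hx : x ∈ cyl s) :
    x ∈ cyl (s ++ [x s.length]) := by
  rintro ⟨i, hi⟩
  rw [List.length_append, List.length_singleton] at hi
  rcases (Nat.lt_succ_iff.1 hi).lt_or_eq with hi | rfl
  · simpa [List.getElem_append_left hi] using hx ⟨i, hi⟩
  · simp

open Classical in
/-- The finite part `T_K ∩ {0,1}^{≤ n}` of the tree of `K`. -/
noncomputable def traceTree (n : ℕ) (K : Set Cantor) : Finset (List Bool) :=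
  (List.finite_length_le Bool n).toFinset.filter fun σ => (K ∩ cyl σ).Nonempty

variable {n : ℕ} {K : Set Cantor}

lemma mem_traceTree {σ : List Bool} :
    σ ∈ traceTree n K ↔ σ.length ≤ n ∧ (K ∩ cyl σ).Nonempty := by
  simp [traceTree]

lemma finTree_traceTree (hK : K.Nonempty) : FinTree n (traceTree n K) := by
  refine ⟨⟨[], mem_traceTree.2 ⟨Nat.zero_le _, by simpa using hK⟩⟩,
    fun σ hσ => (mem_traceTree.1 hσ).1, fun σ τ hστ hτ => ?_, fun σ hσ hlt => ?_⟩
  · obtain ⟨hlen, hK⟩ := mem_traceTree.1 hτ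
    exact mem_traceTree.2 ⟨hστ.length_le.trans hlen, hK.mono (inter_subset_inter_right _
      (cyl_anti hστ))⟩
  · obtain ⟨-, x, hxK, hxσ⟩ := mem_traceTree.1 hσ
    have hchild : σ ++ [x σ.length] ∈ traceTree n K :=
      mem_traceTree.2 ⟨by simpa using hlt, x, hxK, mem_cyl_concat hxσ⟩
    cases hb : x σ.length <;> rw [hb] at hchild <;> simp [hchild]

lemma mem_UA_traceTree (K : CC) : K ∈ UA n (traceTree n K.1) := fun σ hσ => by
  simp [mem_traceTree, hσ]

lemma IsBranching.cap_cyl_le {b0 b1 : ℝ} {μ : Measure CC} (hμ : IsBranching b0 b1 μ)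
    (hb1 : 0 ≤ b1) (hb01 : b1 ≤ b0) (hsum : b0 + b1 ≤ 1) (τ : List Bool) :
    cap μ (cyl τ) ≤ (1 - b1) ^ τ.length := by
  have := hμ.1
  have hcover : {K : CC | (K.1 ∩ cyl τ).Nonempty} ⊆
      ⋃ A ∈ (trees τ.length).filter (τ ∈ ·), UA τ.length A := fun K hK =>
    mem_biUnion (Finset.mem_filter.2 ⟨mem_trees.2 (finTree_traceTree K.2.1),
      mem_traceTree.2 ⟨le_rfl, hK⟩⟩) (mem_UA_traceTree K)
  calc cap μ (cyl τ)
      ≤ ∑ A ∈ (trees τ.length).filter (τ ∈ ·), μ.real (UA τ.length A) :=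
        (measureReal_mono hcover (measure_ne_top _ _)).trans (measureReal_biUnion_finset_le _ _)
    _ = hitWeight b0 b1 τ.length τ :=
        Finset.sum_congr rfl fun A hA => hμ.2 _ A (mem_trees.1 (Finset.mem_filter.1 hA).1)
    _ ≤ (1 - b1) ^ τ.length := hitWeight_le hb1 hb01 hsum _ τ

variable {μ : Measure CC} {P R : Set Cantor}

lemma cap_mono [IsFiniteMeasure μ] (h : P ⊆ R) : cap μ P ≤ cap μ R :=
  measureReal_mono fun _ hK => hK.mono (inter_subset_inter_right _ h)

lemma cap_union_le : cap μ (P ∪ R) ≤ cap μ P + cap μ R := by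
  have : {K : CC | (K.1 ∩ (P ∪ R)).Nonempty} =
      {K : CC | (K.1 ∩ P).Nonempty} ∪ {K : CC | (K.1 ∩ R).Nonempty} := by
    ext K
    simp [inter_union_distrib_left, union_nonempty]
  change μ.real _ ≤ μ.real _ + μ.real _
  rw [this]
  exact measureReal_union_le _ _

end Capacity

theorem stmt_14_general (b0 b1 : ℝ) (hb1 : 0 < b1) (hb01 : b1 ≤ b0) (hsum : b0 + b1 < 1)
    (μ : Measure CC) (hμ : IsBranching b0 b1 μ)
    (n : ℕ) (σ : Fin (n + 1) → List Bool)
    (j : Fin (n + 1)) :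
    cap μ (⋃ k, cyl (σ k)) - cap μ (⋃ k ∈ {k : Fin (n + 1) | k ≠ j}, cyl (σ k)) ≤
      (1 - b1) ^ (σ j).length := by
  have := hμ.1
  set Q' := ⋃ k ∈ {k : Fin (n + 1) | k ≠ j}, cyl (σ k)
  have hsub : ⋃ k, cyl (σ k) ⊆ Q' ∪ cyl (σ j) := by
    refine iUnion_subset fun k x hx => ?_
    by_cases hk : k = j
    · exact Or.inr (hk ▸ hx)
    · exact Or.inl (mem_biUnion hk hx)
  have hcyl := hμ.cap_cyl_le hb1.le hb01 hsum.le (σ j)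
  linarith [cap_mono (μ := μ) hsub, cap_union_le (μ := μ) (P := Q') (R := cyl (σ j))]

/-- for pairwise incomparable strings `σ₀, …, σ_n` and
`Q = ⋃ₖ I(σₖ)`, removing `I(σ_j)` decreases the capacity by at most `(1 − b₁)^{|σ_j|}`. -/
theorem stmt_14 (b0 b1 : ℝ) (hb1 : 0 < b1) (hb01 : b1 ≤ b0) (hsum : b0 + b1 < 1)
    (μ : Measure CC) (hμ : IsBranching b0 b1 μ)
    (n : ℕ) (σ : Fin (n + 1) → List Bool)
    (hinc : ∀ j k : Fin (n + 1), j ≠ k → ¬ σ j <+: σ k)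
    (j : Fin (n + 1)) :
    cap μ (⋃ k, cyl (σ k)) - cap μ (⋃ k ∈ {k : Fin (n + 1) | k ≠ j}, cyl (σ k)) ≤
      (1 - b1) ^ (σ j).length :=
  stmt_14_general b0 b1 hb1 hb01 hsum μ hμ n σ j
end

section
/- Let b̂ = 1 − √2/2 and suppose b̂ ≤ b < 1/2. Define the sequence (p_n) of reals by p₀ = 1 and p_{n+1} = f_b(p_n), where f_b(p) = (2b² − 4b + 2)p − (1 − 2b)²p². Then the sequence (p_n) is antitone, satisfies 0 ≤ p_n ≤ 1 for all n, and lim_{n→∞} p_n = 0. -/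
open Filter Topology Set

/-!
For `1 - √2/2 ≤ b < 1/2` the coefficients of `f_b(p) = a p - c p²` satisfy `0 < c ≤ a ≤ 1`. Hence
`f_b` maps `[0, 1]` into itself, lies below the diagonal there, and has `0` as its only fixed
point in `[0, 1]`. The orbit of `1` is therefore decreasing and bounded below, and by continuity
its limit is a fixed point, i.e. `0`.
-/

theorem tendsto_of_map_le_of_unique_fixedPt {g : ℝ → ℝ} {s : Set ℝ} {a : ℝ} {u : ℕ → ℝ}
    (hg : Continuous g) (hs : IsClosed s) (hsb : BddBelow s) (hmaps : MapsTo g s s)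
    (hle : ∀ x ∈ s, g x ≤ x) (hfix : ∀ x ∈ s, g x = x → x = a)
    (hu0 : u 0 ∈ s) (hrec : ∀ n, u (n + 1) = g (u n)) :
    Antitone u ∧ (∀ n, u n ∈ s) ∧ Tendsto u atTop (𝓝 a) := by
  have hmem : ∀ n, u n ∈ s := by
    intro n
    induction n with
    | zero => exact hu0
    | succ n ih => exact hrec n ▸ hmaps ih
  have hanti : Antitone u := antitone_nat_of_succ_le fun n => hrec n ▸ hle _ (hmem n)
  have hbdd : BddBelow (range u) := hsb.mono (range_subset_iff.2 hmem)
  set L := ⨅ n, u n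
  have hlim : Tendsto u atTop (𝓝 L) := tendsto_atTop_ciInf hanti hbdd
  have hL : L ∈ s := hs.mem_of_tendsto hlim (Eventually.of_forall hmem)
  have hgL : g L = L := by
    refine tendsto_nhds_unique ((hg.tendsto L).comp hlim) ?_
    simpa only [Function.comp_def, ← hrec] using hlim.comp (tendsto_add_atTop_nat 1)
  exact ⟨hanti, hmem, hfix L hL hgL ▸ hlim⟩

section Quadratic

variable {a c : ℝ}

theorem mapsTo_Icc_quadratic (hca : c ≤ a) (ha : a ≤ 1) (hc : 0 ≤ c) :
    MapsTo (fun x => a * x - c * x ^ 2) (Icc 0 1) (Icc 0 1) := by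
  rintro x ⟨hx0, hx1⟩
  constructor
  · nlinarith [mul_nonneg hx0 (sub_nonneg.2 hca), mul_nonneg (mul_nonneg hc hx0) (sub_nonneg.2 hx1)]
  · nlinarith [mul_nonneg (mul_nonneg hc hx0) hx0, mul_nonneg hx0 (sub_nonneg.2 ha)]

theorem quadratic_le_self (ha : a ≤ 1) (hc : 0 ≤ c) {x : ℝ} (hx : 0 ≤ x) :
    a * x - c * x ^ 2 ≤ x := by
  nlinarith [mul_nonneg hx (sub_nonneg.2 ha), mul_nonneg hc (sq_nonneg x)]

theorem eq_zero_of_quadratic_eq_self (ha : a ≤ 1) (hc : 0 < c) {x : ℝ} (hx : 0 ≤ x)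
    (hfix : a * x - c * x ^ 2 = x) : x = 0 := by
  have : c * x ^ 2 ≤ 0 := by nlinarith [mul_nonneg hx (sub_nonneg.2 ha)]
  exact pow_eq_zero_iff two_ne_zero |>.1 <| le_antisymm
    (nonpos_of_mul_nonpos_right (by linarith) hc) (sq_nonneg x)

end Quadratic

theorem quadratic_coeffs_bounds {b : ℝ} (hb1 : 1 - Real.sqrt 2 / 2 ≤ b) (hb2 : b < 1 / 2) :
    0 < (1 - 2 * b) ^ 2 ∧ (1 - 2 * b) ^ 2 ≤ 2 * b ^ 2 - 4 * b + 2 ∧ 2 * b ^ 2 - 4 * b + 2 ≤ 1 := by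
  have hs2 : Real.sqrt 2 ^ 2 = 2 := Real.sq_sqrt zero_le_two
  have hs0 : 0 ≤ Real.sqrt 2 := Real.sqrt_nonneg 2
  have hb0 : 0 ≤ b := by nlinarith
  refine ⟨by nlinarith, by nlinarith, ?_⟩
  -- `2b² − 4b + 1 = 2 (b − 1 + √2/2)(b − 1 − √2/2)`, and `b` lies between the two roots
  nlinarith [mul_nonneg (sub_nonneg.2 hb1) (by linarith : 0 ≤ 1 + Real.sqrt 2 / 2 - b)]

/-- for `1 − √2/2 ≤ b < 1/2`, the sequence `p₀ = 1`,
`p_{n+1} = (2b² − 4b + 2)pₙ − (1 − 2b)²pₙ²` is antitone, stays in `[0,1]`,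
and tends to `0`. -/
theorem stmt_16 (b : ℝ) (hb1 : 1 - Real.sqrt 2 / 2 ≤ b) (hb2 : b < 1 / 2)
    (p : ℕ → ℝ) (hp0 : p 0 = 1)
    (hrec : ∀ n : ℕ,
      p (n + 1) = (2 * b ^ 2 - 4 * b + 2) * p n - (1 - 2 * b) ^ 2 * p n ^ 2) :
    Antitone p ∧ (∀ n, 0 ≤ p n ∧ p n ≤ 1) ∧ Tendsto p atTop (𝓝 0) := by
  obtain ⟨hc, hca, ha⟩ := quadratic_coeffs_bounds hb1 hb2
  exact tendsto_of_map_le_of_unique_fixedPt (by fun_prop) isClosed_Icc bddBelow_Icc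
    (mapsTo_Icc_quadratic hca ha hc.le) (fun x hx => quadratic_le_self ha hc.le hx.1)
    (fun x hx => eq_zero_of_quadratic_eq_self ha hc hx.1) (by simp [hp0]) hrec
end

section
/- Let b̂ = 1 − √2/2 and suppose 0 < b < b̂. Let m_b = (2b² − 4b + 1)/(1 − 2b)² and define the sequence (p_n) of reals by p₀ = 1 and p_{n+1} = f_b(p_n), where f_b(p) = (2b² − 4b + 2)p − (1 − 2b)²p². Then 0 < m_b < 1, f_b(m_b) = m_b, p_n ≥ m_b for all n, the sequence (p_n) is antitone, and lim_{n→∞} p_n = m_b. -/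
/-!
Writing `c = (1 - 2b)²` and `m = m_b`, the map is `f p = p - c p (p - m)`, so
`f p - m = (p - m)(1 - c p)`. As long as `m ≤ p` and `c p ≤ 1` both factors are nonnegative,
hence the orbit of `1` stays above `m` and decreases. Its limit is a fixed point of `f` that is
at least `m > 0`, and the only such fixed point is `m`.
-/

open Filter Topology

section QuadraticOrbit

variable {c m : ℝ} {p : ℕ → ℝ}

theorem mem_Icc_of_quadratic_recursion (hc : 0 ≤ c) (hm : 0 ≤ m) (h0 : m ≤ p 0)
    (hc0 : c * p 0 ≤ 1) (hrec : ∀ n, p (n + 1) = p n - c * p n * (p n - m)) (n : ℕ) :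
    p n ∈ Set.Icc m (p 0) := by
  induction n with
  | zero => exact ⟨h0, le_rfl⟩
  | succ n ih =>
    obtain ⟨hmp, hp0⟩ := ih
    have hstep : p (n + 1) - m = (p n - m) * (1 - c * p n) := by rw [hrec]; ring
    have hcp : c * p n ≤ 1 := (mul_le_mul_of_nonneg_left hp0 hc).trans hc0
    have hdec : 0 ≤ c * p n * (p n - m) :=
      mul_nonneg (mul_nonneg hc (hm.trans hmp)) (sub_nonneg.2 hmp)
    constructor
    · rw [← sub_nonneg, hstep]
      exact mul_nonneg (sub_nonneg.2 hmp) (sub_nonneg.2 hcp)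
    · linarith [hrec n]

theorem antitone_of_quadratic_recursion (hc : 0 ≤ c) (hm : 0 ≤ m) (hle : ∀ n, m ≤ p n)
    (hrec : ∀ n, p (n + 1) = p n - c * p n * (p n - m)) : Antitone p :=
  antitone_nat_of_succ_le fun n => by
    rw [hrec]
    have := mul_nonneg (mul_nonneg hc (hm.trans (hle n))) (sub_nonneg.2 (hle n))
    linarith

theorem tendsto_of_quadratic_recursion (hc : 0 < c) (hm : 0 < m) (hle : ∀ n, m ≤ p n)
    (hrec : ∀ n, p (n + 1) = p n - c * p n * (p n - m)) : Tendsto p atTop (𝓝 m) := by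
  have hanti := antitone_of_quadratic_recursion hc.le hm.le hle hrec
  obtain ⟨L, hL⟩ : ∃ L, Tendsto p atTop (𝓝 L) :=
    ⟨_, tendsto_atTop_ciInf hanti ⟨m, by rintro _ ⟨n, rfl⟩; exact hle n⟩⟩
  have hmL : m ≤ L := ge_of_tendsto' hL hle
  have hfix : L = L - c * L * (L - m) := by
    refine tendsto_nhds_unique ((tendsto_add_atTop_iff_nat 1).2 hL) ?_
    simp only [hrec]
    exact hL.sub ((hL.const_mul c).mul (hL.sub_const m))
  have hLm : c * L * (L - m) = 0 := by linarith
  rcases mul_eq_zero.1 hLm with h | h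
  · exact absurd h (mul_pos hc (hm.trans_le hmL)).ne'
  · rwa [sub_eq_zero.1 h] at hL

end QuadraticOrbit

theorem two_mul_sq_sub_four_mul_add_one_pos {b : ℝ} (hb : b < 1 - Real.sqrt 2 / 2) :
    0 < 2 * b ^ 2 - 4 * b + 1 := by
  have hs : Real.sqrt 2 ^ 2 = 2 := Real.sq_sqrt zero_le_two
  nlinarith [Real.sqrt_nonneg 2]

/-- for `0 < b < 1 − √2/2` and `m_b = (2b² − 4b + 1)/(1 − 2b)²`, the sequence
`p₀ = 1`, `p_{n+1} = (2b² − 4b + 2)pₙ − (1 − 2b)²pₙ²` satisfies `0 < m_b < 1`,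
`f_b(m_b) = m_b`, `pₙ ≥ m_b`, is antitone, and tends to `m_b`. -/
theorem stmt_17 (b : ℝ) (hb0 : 0 < b) (hb : b < 1 - Real.sqrt 2 / 2)
    (p : ℕ → ℝ) (hp0 : p 0 = 1)
    (hrec : ∀ n : ℕ,
      p (n + 1) = (2 * b ^ 2 - 4 * b + 2) * p n - (1 - 2 * b) ^ 2 * p n ^ 2) :
    0 < (2 * b ^ 2 - 4 * b + 1) / (1 - 2 * b) ^ 2 ∧
    (2 * b ^ 2 - 4 * b + 1) / (1 - 2 * b) ^ 2 < 1 ∧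
    (2 * b ^ 2 - 4 * b + 2) * ((2 * b ^ 2 - 4 * b + 1) / (1 - 2 * b) ^ 2) -
        (1 - 2 * b) ^ 2 * ((2 * b ^ 2 - 4 * b + 1) / (1 - 2 * b) ^ 2) ^ 2 =
      (2 * b ^ 2 - 4 * b + 1) / (1 - 2 * b) ^ 2 ∧
    (∀ n, (2 * b ^ 2 - 4 * b + 1) / (1 - 2 * b) ^ 2 ≤ p n) ∧
    Antitone p ∧
    Tendsto p atTop (𝓝 ((2 * b ^ 2 - 4 * b + 1) / (1 - 2 * b) ^ 2)) := by
  have hq := two_mul_sq_sub_four_mul_add_one_pos hb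
  have hc : 0 < (1 - 2 * b) ^ 2 := by nlinarith
  have hc1 : (1 - 2 * b) ^ 2 ≤ 1 := by nlinarith [Real.sqrt_nonneg 2]
  set m := (2 * b ^ 2 - 4 * b + 1) / (1 - 2 * b) ^ 2
  have hm0 : 0 < m := div_pos hq hc
  have hm1 : m < 1 := (div_lt_one hc).2 (by nlinarith)
  have hf (x : ℝ) : (2 * b ^ 2 - 4 * b + 2) * x - (1 - 2 * b) ^ 2 * x ^ 2 =
      x - (1 - 2 * b) ^ 2 * x * (x - m) := by
    have hcm : (1 - 2 * b) ^ 2 * m = 2 * b ^ 2 - 4 * b + 1 := mul_div_cancel₀ _ hc.ne'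
    linear_combination (-x) * hcm
  have hrec' (n : ℕ) := (hrec n).trans (hf (p n))
  have hle (n : ℕ) : m ≤ p n :=
    (mem_Icc_of_quadratic_recursion hc.le hm0.le (hp0 ▸ hm1.le) (by rwa [hp0, mul_one]) hrec' n).1
  exact ⟨hm0, hm1, by rw [hf, sub_self, mul_zero, sub_zero], hle,
    antitone_of_quadratic_recursion hc.le hm0.le hle hrec',
    tendsto_of_quadratic_recursion hc hm0 hle hrec'⟩
end

section
/- Let μ* be any Borel probability measure on C and let q be a real number. Then the set {Q ∈ C : μ*({K ∈ C : K ∩ Q ≠ ∅}) < q} is open in the hit-or-miss topology on C. -/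
open Set MeasureTheory Topology Filter

/-!
A closed `Q ⊆ 2^ℕ` is the intersection of its open `δ`-thickenings (for a compatible metric), and
a compact `K` missing `Q` already misses some thickening. Hence the hitting set of `Q` is the
decreasing intersection of the open hitting sets of these thickenings, and by continuity from
above one thickening `U` has hitting measure `< q`. Then `{Q' : Q' ⊆ U}` is a hit-or-miss
neighbourhood of `Q` on which the hitting measure stays `< q`.
-/

open Metric
open scoped ENNReal

theorem IsCompact.inter_nonempty_of_forall_inter_thickening_nonempty {X : Type*}
    [PseudoEMetricSpace X] {K Q : Set X} (hK : IsCompact K) (hQ : IsClosed Q)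
    (h : ∀ δ > 0, (K ∩ thickening δ Q).Nonempty) : (K ∩ Q).Nonempty := by
  rw [← not_disjoint_iff_nonempty_inter]
  intro hKQ
  obtain ⟨δ, hδ, hdisj⟩ := hKQ.exists_thickenings hK hQ
  exact not_disjoint_iff_nonempty_inter.2 (h δ hδ)
    (hdisj.mono_left (self_subset_thickening hδ K))

instance : BorelSpace CC := ⟨rfl⟩

def hitting (U : Set Cantor) : Set CC := {K | (K.1 ∩ U).Nonempty}

theorem hitting_mono : Monotone hitting := fun _ _ hUV _ hK =>
  hK.mono (inter_subset_inter_right _ hUV)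

theorem isOpen_hitting {U : Set Cantor} (hU : IsOpen U) : IsOpen (hitting U) :=
  .basic _ (Or.inl ⟨U, hU, rfl⟩)

theorem isOpen_setOf_subset {U : Set Cantor} (hU : IsOpen U) : IsOpen {K : CC | K.1 ⊆ U} :=
  .basic _ (Or.inr ⟨U, hU, rfl⟩)

theorem exists_isOpen_superset_measure_hitting_lt (μ : Measure CC) [IsFiniteMeasure μ]
    {Q : Set Cantor} (hQ : IsClosed Q) {r : ℝ≥0∞} (h : μ (hitting Q) < r) :
    ∃ U, IsOpen U ∧ Q ⊆ U ∧ μ (hitting U) < r := by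
  let := TopologicalSpace.pseudoMetrizableSpacePseudoMetric Cantor
  have hInter : ⋂ δ > 0, hitting (thickening δ Q) = hitting Q := by
    ext K
    simp only [mem_iInter]
    exact ⟨K.2.2.isCompact.inter_nonempty_of_forall_inter_thickening_nonempty hQ,
      fun hK δ hδ => hitting_mono (self_subset_thickening hδ Q) hK⟩
  have hlim := tendsto_measure_biInter_gt (μ := μ) (a := (0 : ℝ))
    (s := fun δ => hitting (thickening δ Q))
    (fun _ _ => (isOpen_hitting isOpen_thickening).measurableSet.nullMeasurableSet)
    (fun _ _ _ hij => hitting_mono (thickening_mono hij Q)) ⟨1, one_pos, measure_ne_top _ _⟩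
  rw [hInter] at hlim
  obtain ⟨δ, hlt, hδ⟩ := ((hlim.eventually (gt_mem_nhds h)).and self_mem_nhdsWithin).exists
  exact ⟨thickening δ Q, isOpen_thickening, self_subset_thickening hδ Q, hlt⟩

theorem isOpen_setOf_measure_hitting_lt (μ : Measure CC) [IsFiniteMeasure μ] (r : ℝ≥0∞) :
    IsOpen {Q : CC | μ (hitting Q.1) < r} := by
  refine isOpen_iff_forall_mem_open.2 fun Q hQ => ?_
  obtain ⟨U, hU, hQU, hlt⟩ := exists_isOpen_superset_measure_hitting_lt μ Q.2.2 hQ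
  exact ⟨{Q' | Q'.1 ⊆ U}, fun Q' hQ' => (measure_mono (hitting_mono hQ')).trans_lt hlt,
    isOpen_setOf_subset hU, hQU⟩

/-- for any Borel probability measure `μ*` on `C` and any real `q`, the set
`{Q ∈ C : μ*({K : K ∩ Q ≠ ∅}) < q}` is open in the hit-or-miss topology. -/
theorem stmt_19 (μ : Measure CC) (hμ : IsProbabilityMeasure μ) (q : ℝ) :
    IsOpen {Q : CC | (μ {K : CC | (K.1 ∩ Q.1).Nonempty}).toReal < q} := by
  have h : {Q : CC | (μ {K : CC | (K.1 ∩ Q.1).Nonempty}).toReal < q}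
      = {Q | μ (hitting Q.1) < ENNReal.ofReal q} := by
    ext Q
    exact (ENNReal.lt_ofReal_iff_toReal_lt (measure_ne_top μ _)).symm
  rw [h]
  exact isOpen_setOf_measure_hitting_lt μ _
end
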